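/- arXiv:2505.15604 — 11 statements merged into one kernel-verified Lean document; each statement's English description precedes it below -/
import Mathlib

section
/- If f is a non-identity diagonal automorphism of A_Γ with f(e_i) = t_i e_i, then for every vertex i and every neighbor j of i, t_i ≠ t_j. -/
/-- The evolution algebra product of the graph `G`: basis vectors multiply by
`e_i · e_j = 0` for `i ≠ j` and `e_i ^ 2 = ∑_{ℓ ∈ N(i)} e_ℓ`. -/
def evMul {V K : Type*} [Fintype V] [Field K] (G : SimpleGraph V) [DecidableRel G.Adj]
    (x y : V → K) : V → K :=
  fun m => ∑ i, x i * y i * (if G.Adj i m then 1 else 0)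

/-- `f` is an algebra automorphism of the evolution algebra of `G`. -/
def IsEvAut {V K : Type*} [Fintype V] [Field K] (G : SimpleGraph V) [DecidableRel G.Adj]
    (f : (V → K) → (V → K)) : Prop :=
  Function.Bijective f ∧ IsLinearMap K f ∧ ∀ x y, f (evMul G x y) = evMul G (f x) (f y)

lemma ev_key {V K : Type*} [Fintype V] [DecidableEq V] [Field K]
    (f : (V → K) → (V → K)) (hf : IsLinearMap K f) (t : V → K)
    (hdiag : ∀ i, f (Pi.single i 1) = t i • (Pi.single i 1 : V → K)) :
    ∀ x m, f x m = t m * x m := by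
  intro x m
  set F : (V → K) →ₗ[K] (V → K) := IsLinearMap.mk' f hf with hF
  have hx : x = ∑ i, x i • (Pi.single i 1 : V → K) := by
    funext v
    simp [Pi.single_apply, Finset.sum_apply, mul_ite, Finset.sum_ite_eq']
  have : f x = ∑ i, x i • (t i • (Pi.single i 1 : V → K)) := by
    conv_lhs => rw [hx]
    show F _ = _
    rw [map_sum]
    simp only [map_smul, hF, IsLinearMap.mk'_apply, hdiag]
  rw [this]
  simp [Pi.single_apply, Finset.sum_apply, mul_ite, Finset.sum_ite_eq']
  ring

/-- A non-identity diagonal automorphism of `A_Γ` has distinct coefficients on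
any pair of adjacent vertices. -/
theorem diag_aut_ne_of_adj {V K : Type*} [Fintype V] [DecidableEq V] [Field K] [CharZero K]
    (G : SimpleGraph V) [DecidableRel G.Adj] (hconn : G.Connected)
    (f : (V → K) → (V → K)) (hf : IsEvAut G f)
    (t : V → K) (ht : ∀ i, t i ≠ 0)
    (hdiag : ∀ i, f (Pi.single i 1) = t i • (Pi.single i 1 : V → K))
    (hne : f ≠ id) :
    ∀ i j, G.Adj i j → t i ≠ t j := by
  have key := ev_key f hf.2.1 t hdiag
  -- t j = t i ^ 2 whenever Adj i j
  have hsq : ∀ i j, G.Adj i j → t j = t i ^ 2 := by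
    intro i j hij
    have hmul := hf.2.2 (Pi.single i 1) (Pi.single i 1)
    have h1 : evMul G (Pi.single i 1 : V → K) (Pi.single i 1) j = 1 := by
      unfold evMul
      rw [Finset.sum_eq_single i]
      · simp [hij]
      · intro b _ hb; simp [Pi.single_apply, hb]
      · simp
    have h2 : evMul G (f (Pi.single i 1)) (f (Pi.single i 1)) j = t i ^ 2 := by
      rw [hdiag]
      unfold evMul
      rw [Finset.sum_eq_single i]
      · simp [hij]; ring
      · intro b _ hb; simp [Pi.single_apply, hb]
      · simp
    have := congrFun hmul j
    rw [h2, key] at this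
    rw [h1, mul_one] at this
    exact this
  intro i j hij heq
  -- then t i = 1
  have h1 : t i = 1 := by
    have e1 : t j = t i ^ 2 := hsq i j hij
    have e2 : t i = t i ^ 2 := heq ▸ e1
    have : t i * (t i - 1) = 0 := by ring_nf; linear_combination -e2
    rcases mul_eq_zero.1 this with h | h
    · exact absurd h (ht i)
    · exact sub_eq_zero.1 h
  -- propagate along walks: t v = 1 everywhere
  have hstep : ∀ {a b : V} (_ : G.Walk a b), t a = 1 → t b = 1 := by
    intro a b w
    induction w with
    | nil => exact fun h => h
    | cons hab p ih => exact fun h => ih (by rw [hsq _ _ hab, h, one_pow])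
  have hall : ∀ v, t v = 1 := by
    intro v
    obtain ⟨w⟩ := hconn.preconnected i v
    exact hstep w h1
  -- then f = id
  apply hne
  funext x
  funext v
  simp [key, hall]
end

section
/- Let K be an algebraically closed field of characteristic zero and Γ a finite connected simple graph without loops. The diagonal subgroup D of Aut(A_Γ) (automorphisms diagonal in the natural basis) is nontrivial if and only if Γ is bipartite. -/
section Aux

variable {V K : Type*} [Fintype V] [DecidableEq V] [Field K]

lemma exists_omega (K : Type*) [Field K] [IsAlgClosed K] :
    ∃ ω : K, ω ^ 2 + ω + 1 = 0 := by
  obtain ⟨ω, hω⟩ := IsAlgClosed.exists_root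
    (Polynomial.X ^ 2 + Polynomial.X + 1 : Polynomial K) (by
      intro h
      have : ((Polynomial.X ^ 2 + Polynomial.X + 1 : Polynomial K)).degree = 2 := by
        compute_degree!
      rw [h] at this
      simp at this)
  exact ⟨ω, by simpa using hω⟩

lemma evMul_smul_single (G : SimpleGraph V) [DecidableRel G.Adj] (c : K) (i m : V) :
    evMul G (c • (Pi.single i 1 : V → K)) (c • (Pi.single i 1 : V → K)) m
      = c ^ 2 * (if G.Adj i m then 1 else 0) := by
  unfold evMul
  rw [Finset.sum_eq_single i]
  · simp [sq]
  · intro j _ hj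
    simp [Pi.single_apply, hj]
  · simp

lemma evMul_single (G : SimpleGraph V) [DecidableRel G.Adj] (i m : V) :
    evMul G (Pi.single i 1 : V → K) (Pi.single i 1 : V → K) m
      = (if G.Adj i m then 1 else 0) := by
  have := evMul_smul_single G (1 : K) i m
  simpa using this

lemma root_sum (a b : K) (ha : a ^ 2 + a + 1 = 0) (hb : b ^ 2 + b + 1 = 0) (hab : a ≠ b) :
    a + b = -1 := by
  have h : (a - b) * (a + b + 1) = 0 := by linear_combination ha - hb
  rcases mul_eq_zero.mp h with h | h
  · exact absurd (sub_eq_zero.mp h) hab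
  · linear_combination h

end Aux

/-- Over an algebraically closed field of characteristic zero, the diagonal subgroup of
`Aut(A_Γ)` is nontrivial iff `Γ` is bipartite (i.e. 2-colorable). -/
theorem diag_subgroup_nontrivial_iff_bipartite {V K : Type*} [Fintype V] [DecidableEq V]
    [Field K] [CharZero K] [IsAlgClosed K]
    (G : SimpleGraph V) [DecidableRel G.Adj] (hconn : G.Connected) :
    (∃ (f : (V → K) → (V → K)) (t : V → K), IsEvAut G f ∧ (∀ i, t i ≠ 0) ∧
      (∀ i, f (Pi.single i 1) = t i • (Pi.single i 1 : V → K)) ∧ f ≠ id) ↔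
    G.Colorable 2 := by
  classical
  constructor
  · rintro ⟨f, t, ⟨hbij, hlin, hmul⟩, ht0, hfe, hfne⟩
    -- f acts diagonally on everything
    have hfx : ∀ x : V → K, f x = fun j => t j * x j := by
      intro x
      have hx : x = ∑ i, x i • (Pi.single i 1 : V → K) := by
        funext j
        simp [Pi.single_apply]
      have hL : f x = ∑ i, x i • (t i • (Pi.single i 1 : V → K)) := by
        conv_lhs => rw [hx]
        rw [show f = (IsLinearMap.mk' f hlin : (V → K) →ₗ[K] (V → K)) from rfl, map_sum]
        simp only [map_smul, IsLinearMap.mk'_apply, hfe]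
      rw [hL]
      funext j
      simp [Pi.single_apply, mul_comm]
    -- key relation on adjacent vertices
    have key : ∀ i m, G.Adj i m → t m = t i ^ 2 := by
      intro i m him
      have h := congrFun (hmul (Pi.single i 1) (Pi.single i 1)) m
      rw [hfx, hfe] at h
      simp only [evMul_smul_single, evMul_single] at h
      rw [if_pos him] at h
      simpa using h
    -- no t is 1
    have walkprop : ∀ {i j : V} (w : G.Walk i j), t i = 1 → t j = 1 := by
      intro i j w
      induction w with
      | nil => exact fun h => h
      | cons hadj _ ih =>
        intro h1
        exact ih (by rw [key _ _ hadj, h1]; ring)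
    have hv : ∃ v, t v ≠ 1 := by
      by_contra h
      push_neg at h
      apply hfne
      funext x
      rw [hfx x]
      funext j
      simp [h j]
    obtain ⟨v, hv⟩ := hv
    have hne1 : ∀ i, t i ≠ 1 := fun i h1 => hv (walkprop ((hconn i v).some) h1)
    -- quadratic relation at any vertex with a neighbor
    have quad : ∀ i j, G.Adj i j → t i ^ 2 + t i + 1 = 0 := by
      intro i j hij
      have h1 : t j = t i ^ 2 := key i j hij
      have h2 : t i = t j ^ 2 := key j i hij.symm
      have h4 : t i * ((t i - 1) * (t i ^ 2 + t i + 1)) = 0 := by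
        linear_combination (-(t j + t i ^ 2)) * h1 - h2
      rcases mul_eq_zero.mp h4 with h | h
      · exact absurd h (ht0 i)
      rcases mul_eq_zero.mp h with h | h
      · exact absurd (sub_eq_zero.mp h) (hne1 i)
      · exact h
    -- build the 2-coloring
    obtain ⟨v0⟩ := hconn.nonempty
    refine SimpleGraph.Coloring.colorable (SimpleGraph.Coloring.mk
      (fun i => if t i = t v0 then (0 : Fin 2) else 1) ?_)
    intro i j hij
    have htij : t i ≠ t j := by
      intro h
      have e : t i ^ 2 = t i := by rw [← key i j hij, ← h]
      have h5 : t i * (t i - 1) = 0 := by linear_combination e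
      rcases mul_eq_zero.mp h5 with h' | h'
      · exact ht0 i h'
      · exact hne1 i (sub_eq_zero.mp h')
    by_cases hi : t i = t v0 <;> by_cases hj : t j = t v0
    · exact absurd (hi.trans hj.symm) htij
    · simp only [if_pos hi, if_neg hj]
      decide
    · simp only [if_neg hi, if_pos hj]
      decide
    · exfalso
      have qv0 : t v0 ^ 2 + t v0 + 1 = 0 := by
        obtain ⟨w⟩ := hconn v0 i
        cases w with
        | nil => exact absurd rfl hi
        | cons hadj _ => exact quad v0 _ hadj
      have qi := quad i j hij
      have qj := quad j i hij.symm
      have s1 := root_sum _ _ qi qj htij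
      have s2 := root_sum _ _ qi qv0 hi
      exact hj (by linear_combination s1 - s2)
  · intro hcol
    obtain ⟨c⟩ := hcol
    obtain ⟨ω, hω⟩ := exists_omega K
    have hω0 : ω ≠ 0 := by
      intro h; rw [h] at hω; simp at hω
    have hω1 : ω ≠ 1 := by
      intro h; rw [h] at hω; norm_num at hω
    have hω3 : ω ^ 3 = 1 := by linear_combination (ω - 1) * hω
    have hω21 : ω ^ 2 ≠ 1 := by
      intro h
      have h2 : ω = -2 := by linear_combination hω - h
      rw [h2] at hω; norm_num at hω
    have fin2 : ∀ a : Fin 2, a = 0 ∨ a = 1 := by decide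
    set t : V → K := fun i => if c i = 0 then ω else ω ^ 2 with ht
    have ht0 : ∀ i, t i ≠ 0 := by
      intro i
      by_cases h : c i = 0 <;> simp [ht, h, hω0, pow_ne_zero]
    have hkey : ∀ i m, G.Adj i m → t i ^ 2 = t m := by
      intro i m him
      have hc : c i ≠ c m := c.valid him
      by_cases h : c i = 0
      · have hm : c m ≠ 0 := fun e => hc (h.trans e.symm)
        simp [ht, h, hm]
      · have hm : c m = 0 := by
          rcases fin2 (c m) with e | e
          · exact e
          · rcases fin2 (c i) with e' | e'
            · exact absurd e' h
            · exact absurd (e'.trans e.symm) hc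
        simp only [ht, if_neg h, if_pos hm]
        linear_combination ω * hω3
    refine ⟨fun x j => t j * x j, t, ⟨?_, ?_, ?_⟩, ht0, ?_, ?_⟩
    · refine Function.bijective_iff_has_inverse.mpr
        ⟨fun x j => (t j)⁻¹ * x j, ?_, ?_⟩ <;> intro x <;> funext j
      · show (t j)⁻¹ * (t j * x j) = x j
        rw [← mul_assoc, inv_mul_cancel₀ (ht0 j), one_mul]
      · show t j * ((t j)⁻¹ * x j) = x j
        rw [← mul_assoc, mul_inv_cancel₀ (ht0 j), one_mul]
    · constructor
      · intro x y; funext j; simp [mul_add]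
      · intro a x; funext j
        simp only [Pi.smul_apply, smul_eq_mul]; ring
    · intro x y
      funext m
      show t m * evMul G x y m = evMul G _ _ m
      unfold evMul
      beta_reduce
      rw [Finset.mul_sum]
      refine Finset.sum_congr rfl fun i _ => ?_
      by_cases h : G.Adj i m
      · simp only [h, if_true, mul_one]
        rw [← hkey i m h]; ring
      · simp [h]
    · intro i
      funext j
      simp only [Pi.smul_apply, Pi.single_apply, smul_eq_mul]
      by_cases h : j = i <;> simp [h]
    · intro h
      obtain ⟨v⟩ := hconn.nonempty
      have hv := congrFun (congrFun h (Pi.single v 1)) v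
      simp only [id_eq, Pi.single_eq_same, mul_one] at hv
      by_cases hcv : c v = 0
      · rw [ht] at hv; simp only [hcv, if_true] at hv; exact hω1 hv
      · rw [ht] at hv; simp only [if_neg hcv] at hv; exact hω21 hv
end

section
/- Suppose Γ is bipartite with parts V_1 and V_2, and α, β are the two nontrivial cubic roots of unity in an algebraically closed field K of characteristic zero. Then the linear map f defined by f(e_i) = α e_i for i ∈ V_1 and f(e_i) = β e_i for i ∈ V_2 is an algebra automorphism of A_Γ. -/
/-!
A diagonal map `e_i ↦ c_i e_i` with all `c_i ≠ 0` is an automorphism of `A_Γ` as soon as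
`c_i ^ 2 = c_m` along every edge `i ~ m`, since `e_i ^ 2` is a sum of the `e_m` with `m ~ i`.
For two distinct nontrivial cube roots of unity we have `α ^ 2 = β` and `β ^ 2 = α`, so on a
bipartite graph the weights `α` on `V₁` and `β` on `V₂` satisfy this edge condition.
-/

section CubeRoots

variable {R : Type*} [CommRing R] [NoZeroDivisors R]

theorem sq_add_add_one_eq_zero_of_pow_three_eq_one {α : R} (h3 : α ^ 3 = 1) (h1 : α ≠ 1) :
    α ^ 2 + α + 1 = 0 := by
  have h : (α - 1) * (α ^ 2 + α + 1) = 0 := by linear_combination h3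
  exact (mul_eq_zero.mp h).resolve_left (sub_ne_zero.mpr h1)

theorem sq_eq_of_pow_three_eq_one {α β : R} (hα3 : α ^ 3 = 1) (hβ3 : β ^ 3 = 1)
    (hα1 : α ≠ 1) (hβ1 : β ≠ 1) (hαβ : α ≠ β) : α ^ 2 = β := by
  have hα := sq_add_add_one_eq_zero_of_pow_three_eq_one hα3 hα1
  have hβ := sq_add_add_one_eq_zero_of_pow_three_eq_one hβ3 hβ1
  have h : (α - β) * (α + β + 1) = 0 := by linear_combination hα - hβ
  have hsum : α + β + 1 = 0 := (mul_eq_zero.mp h).resolve_left (sub_ne_zero.mpr hαβ)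
  linear_combination hα - hsum

end CubeRoots

section Diagonal

variable {V K : Type*} [Fintype V] [Field K] (G : SimpleGraph V) [DecidableRel G.Adj]

theorem evMul_diagonal {c : V → K} (hc : ∀ i m, G.Adj i m → c i ^ 2 = c m) (x y : V → K) :
    (fun m => c m * evMul G x y m) = evMul G (fun m => c m * x m) (fun m => c m * y m) := by
  funext m
  simp only [evMul, Finset.mul_sum]
  refine Finset.sum_congr rfl fun i _ => ?_
  by_cases hadj : G.Adj i m
  · simp only [if_pos hadj, ← hc i m hadj]
    ring
  · simp [hadj]

theorem isEvAut_diagonal {c : V → K} (hc0 : ∀ m, c m ≠ 0)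
    (hc : ∀ i m, G.Adj i m → c i ^ 2 = c m) :
    IsEvAut G (fun x m => c m * x m) := by
  refine ⟨?_, ⟨fun x y => ?_, fun a x => ?_⟩, fun x y => evMul_diagonal G hc x y⟩
  · refine Function.bijective_iff_has_inverse.mpr ⟨fun x m => (c m)⁻¹ * x m, ?_, ?_⟩ <;>
      intro x <;> funext m <;> simp [hc0]
  · funext m
    exact mul_add _ _ _
  · funext m
    exact mul_left_comm _ _ _

end Diagonal

theorem bipartite_diag_aut_general {V K : Type*} [Fintype V] [Field K]
    (G : SimpleGraph V) [DecidableRel G.Adj]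
    (V₁ : Set V) [DecidablePred (· ∈ V₁)]
    (hbip : ∀ i j, G.Adj i j → (i ∈ V₁ ↔ j ∉ V₁))
    (α β : K) (hα3 : α ^ 3 = 1) (hβ3 : β ^ 3 = 1) (hα1 : α ≠ 1) (hβ1 : β ≠ 1) (hαβ : α ≠ β) :
    IsEvAut G (fun x m => (if m ∈ V₁ then α else β) * x m) := by
  have hαsq : α ^ 2 = β := sq_eq_of_pow_three_eq_one hα3 hβ3 hα1 hβ1 hαβ
  have hβsq : β ^ 2 = α := sq_eq_of_pow_three_eq_one hβ3 hα3 hβ1 hα1 hαβ.symm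
  have hα0 : α ≠ 0 := by rintro rfl; norm_num at hα3
  have hβ0 : β ≠ 0 := by rintro rfl; norm_num at hβ3
  refine isEvAut_diagonal G (fun m => by split_ifs <;> assumption) fun i m hadj => ?_
  by_cases hi : i ∈ V₁
  · simp [hi, (hbip i m hadj).mp hi, hαsq]
  · have hm : m ∈ V₁ := by simpa [hi] using (hbip i m hadj).not
    simp [hi, hm, hβsq]

/-- If `Γ` is bipartite with parts `V₁`, `V₂ = V₁ᶜ` and `α, β` are the two nontrivial
cubic roots of unity, then `e_i ↦ α e_i` (`i ∈ V₁`), `e_i ↦ β e_i` (`i ∉ V₁`) is an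
algebra automorphism of `A_Γ`. -/
theorem bipartite_diag_aut {V K : Type*} [Fintype V] [DecidableEq V] [Field K] [CharZero K]
    [IsAlgClosed K]
    (G : SimpleGraph V) [DecidableRel G.Adj] (hconn : G.Connected)
    (V₁ : Set V) [DecidablePred (· ∈ V₁)]
    (hbip : ∀ i j, G.Adj i j → (i ∈ V₁ ↔ j ∉ V₁))
    (α β : K) (hα3 : α ^ 3 = 1) (hβ3 : β ^ 3 = 1) (hα1 : α ≠ 1) (hβ1 : β ≠ 1) (hαβ : α ≠ β) :
    IsEvAut G (fun x m => (if m ∈ V₁ then α else β) * x m) :=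
  bipartite_diag_aut_general G V₁ hbip α β hα3 hβ3 hα1 hβ1 hαβ
end

section
/- Let f be an automorphism of A_Γ with f(e_i) = Σ_k t_{ik} e_k. Then for all vertices i, r: Σ_{k ∈ N(r)} t_{ik}^2 = Σ_{ℓ ∈ N(i)} t_{ℓ r}. -/
/-- For an automorphism `f` of `A_Γ` with matrix entries `t i k`,
`∑_{k ∈ N(r)} t_{ik}² = ∑_{ℓ ∈ N(i)} t_{ℓ r}` for all `i, r`. -/
theorem aut_entries_square_sum {V K : Type*} [Fintype V] [DecidableEq V] [Field K] [CharZero K]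
    (G : SimpleGraph V) [DecidableRel G.Adj] (hconn : G.Connected)
    (f : (V → K) → (V → K)) (hf : IsEvAut G f)
    (t : V → V → K) (ht : ∀ i, f (Pi.single i 1) = t i) :
    ∀ i r, ∑ k ∈ G.neighborFinset r, (t i k) ^ 2 = ∑ ℓ ∈ G.neighborFinset i, t ℓ r := by
  obtain ⟨hbij, hlin, hmul⟩ := hf
  intro i r
  have key : evMul G (Pi.single i (1:K)) (Pi.single i 1) =
      ∑ ℓ ∈ G.neighborFinset i, Pi.single ℓ (1:K) := by
    funext m
    rw [Finset.sum_apply]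
    simp only [evMul, Pi.single_apply, SimpleGraph.neighborFinset_eq_filter,
      Finset.sum_filter]
    rw [Finset.sum_eq_single i (fun j _ hj => by simp [hj]) (by simp), if_pos rfl, one_mul,
      Finset.sum_eq_single m (fun l _ hl => by simp [Ne.symm hl]) (by simp)]
    simp
  have hprod := hmul (Pi.single i 1) (Pi.single i 1)
  rw [key, ht i] at hprod
  have hsum : f (∑ ℓ ∈ G.neighborFinset i, Pi.single ℓ (1:K)) =
      ∑ ℓ ∈ G.neighborFinset i, t ℓ := by
    rw [show f = ⇑(IsLinearMap.mk' f hlin) from rfl, map_sum]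
    exact Finset.sum_congr rfl fun ℓ _ => ht ℓ
  rw [hsum] at hprod
  have h := congrFun hprod r
  rw [Finset.sum_apply] at h
  rw [show (∑ ℓ ∈ G.neighborFinset i, t ℓ r) = evMul G (t i) (t i) r from h]
  simp only [evMul, mul_ite, mul_one, mul_zero, ← sq,
    SimpleGraph.neighborFinset_eq_filter, Finset.sum_filter]
  exact Finset.sum_congr rfl fun k _ => if_congr (G.adj_comm r k) rfl rfl
end

section
/- Let f be an automorphism of the random-walk evolution algebra A_{RW(Γ)} with f(e_i) = Σ_k t_{ik} e_k. Then for all vertices r and all i ≠ j: Σ_{k ∈ N(r)} (1/d_k) t_{ik} t_{jk} = 0, where d_k is the degree of vertex k. -/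
/-- The random-walk evolution algebra product of the graph `G`: basis vectors multiply by
`e_i · e_j = 0` for `i ≠ j` and `e_i ^ 2 = (1/d_i) ∑_{ℓ ∈ N(i)} e_ℓ`, `d_i` the degree. -/
def rwMul {V K : Type*} [Fintype V] [Field K] (G : SimpleGraph V) [DecidableRel G.Adj]
    (x y : V → K) : V → K :=
  fun m => ∑ i, x i * y i * (if G.Adj i m then ((G.degree i : K))⁻¹ else 0)

/-- `f` is an algebra automorphism of the random-walk evolution algebra of `G`. -/
def IsRwAut {V K : Type*} [Fintype V] [Field K] (G : SimpleGraph V) [DecidableRel G.Adj]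
    (f : (V → K) → (V → K)) : Prop :=
  Function.Bijective f ∧ IsLinearMap K f ∧ ∀ x y, f (rwMul G x y) = rwMul G (f x) (f y)

/-- For an automorphism `f` of `A_{RW(Γ)}` with matrix entries `t i k`,
`∑_{k ∈ N(r)} (1/d_k) t_{ik} t_{jk} = 0` for all `r` and all `i ≠ j`. -/
theorem rw_aut_entries_orthogonal {V K : Type*} [Fintype V] [DecidableEq V] [Field K]
    [CharZero K]
    (G : SimpleGraph V) [DecidableRel G.Adj] (hconn : G.Connected)
    (f : (V → K) → (V → K)) (hf : IsRwAut G f)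
    (t : V → V → K) (ht : ∀ i, f (Pi.single i 1) = t i) :
    ∀ r i j, i ≠ j →
      ∑ k ∈ G.neighborFinset r, ((G.degree k : K))⁻¹ * (t i k * t j k) = 0 := by
  intro r i j hij
  have hlin := hf.2.1
  have hf0 : f 0 = 0 := (hlin.mk' f).map_zero
  have hmul : rwMul G (Pi.single i (1 : K)) (Pi.single j 1) = 0 := by
    funext m
    simp only [rwMul]
    apply Finset.sum_eq_zero
    intro l _
    rcases eq_or_ne l i with rfl | h
    · rw [Pi.single_eq_of_ne hij]; ring
    · rw [Pi.single_eq_of_ne h]; ring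
  have key : rwMul G (t i) (t j) = 0 := by
    rw [← ht i, ← ht j, ← hf.2.2, hmul, hf0]
  have := congrFun key r
  simp only [rwMul, Pi.zero_apply] at this
  rw [← this]
  rw [show G.neighborFinset r = Finset.univ.filter (fun k => G.Adj k r) from by
    ext k; simp [SimpleGraph.adj_comm]]
  rw [Finset.sum_filter]
  apply Finset.sum_congr rfl
  intro k _
  by_cases h : G.Adj k r <;> simp [h] <;> ring
end

section
/- Let f be an automorphism of A_{RW(Γ)} with f(e_i) = Σ_k t_{ik} e_k. Then for all vertices i, r: Σ_{k ∈ N(r)} (1/d_k) t_{ik}^2 = Σ_{ℓ ∈ N(i)} (1/d_i) t_{ℓ r}. -/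
/-- For an automorphism `f` of `A_{RW(Γ)}` with matrix entries `t i k`,
`∑_{k ∈ N(r)} (1/d_k) t_{ik}² = ∑_{ℓ ∈ N(i)} (1/d_i) t_{ℓ r}` for all `i, r`. -/
theorem rw_aut_entries_square_sum {V K : Type*} [Fintype V] [DecidableEq V] [Field K]
    [CharZero K]
    (G : SimpleGraph V) [DecidableRel G.Adj] (hconn : G.Connected)
    (f : (V → K) → (V → K)) (hf : IsRwAut G f)
    (t : V → V → K) (ht : ∀ i, f (Pi.single i 1) = t i) :
    ∀ i r, ∑ k ∈ G.neighborFinset r, ((G.degree k : K))⁻¹ * (t i k) ^ 2 =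
      ∑ ℓ ∈ G.neighborFinset i, ((G.degree i : K))⁻¹ * t ℓ r := by
  intro i r
  obtain ⟨hbij, hlin, hmul⟩ := hf
  have L : (V → K) →ₗ[K] (V → K) := IsLinearMap.mk' f hlin
  -- f applied to any x, evaluated at r
  have hfx : ∀ x : V → K, f x r = ∑ ℓ, x ℓ * t ℓ r := by
    intro x
    have hx : x = ∑ ℓ, Pi.single ℓ (x ℓ) := (Finset.univ_sum_single x).symm
    calc f x r = (IsLinearMap.mk' f hlin) (∑ ℓ, Pi.single ℓ (x ℓ)) r := by rw [← hx]; rfl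
      _ = (∑ ℓ, (IsLinearMap.mk' f hlin) (Pi.single ℓ (x ℓ))) r := by rw [map_sum]
      _ = ∑ ℓ, (IsLinearMap.mk' f hlin) (Pi.single ℓ (x ℓ)) r := by
          rw [Finset.sum_apply]
      _ = ∑ ℓ, x ℓ * t ℓ r := by
          refine Finset.sum_congr rfl fun ℓ _ => ?_
          have h1 : Pi.single ℓ (x ℓ) = x ℓ • (Pi.single ℓ 1 : V → K) := by
            rw [← Pi.single_smul, smul_eq_mul, mul_one]
          rw [h1, map_smul]
          show x ℓ * f (Pi.single ℓ 1) r = _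
          rw [ht]
  have key := congrFun (hmul (Pi.single i 1) (Pi.single i 1)) r
  rw [ht] at key
  -- compute the product e_i * e_i
  have hei : ∀ m, rwMul G (Pi.single i 1) (Pi.single i 1) m
      = if G.Adj i m then ((G.degree i : K))⁻¹ else 0 := by
    intro m
    unfold rwMul
    rw [Finset.sum_eq_single i]
    · simp
    · intro b _ hb; simp [Pi.single_eq_of_ne hb]
    · simp
  -- RHS: f of the product
  rw [hfx] at key
  have hR : ∑ ℓ, rwMul G (Pi.single i 1) (Pi.single i 1) ℓ * t ℓ r
      = ∑ ℓ ∈ G.neighborFinset i, ((G.degree i : K))⁻¹ * t ℓ r := by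
    rw [Finset.sum_congr rfl fun ℓ _ => by rw [hei ℓ]]
    rw [← Finset.sum_filter_of_ne (p := fun ℓ => G.Adj i ℓ)]
    · rw [show Finset.univ.filter (fun ℓ => G.Adj i ℓ) = G.neighborFinset i from by
        ext; simp]
      refine Finset.sum_congr rfl fun ℓ hℓ => ?_
      rw [SimpleGraph.mem_neighborFinset] at hℓ
      simp [hℓ]
    · intro ℓ _ h
      by_contra hadj
      simp [hadj] at h
  -- LHS: product of images
  have hL2 : rwMul G (t i) (t i) r
      = ∑ k ∈ G.neighborFinset r, ((G.degree k : K))⁻¹ * (t i k) ^ 2 := by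
    unfold rwMul
    rw [← Finset.sum_filter_of_ne (p := fun k => G.Adj k r)]
    · rw [show Finset.univ.filter (fun k => G.Adj k r) = G.neighborFinset r from by
        ext k; simp [G.adj_comm]]
      refine Finset.sum_congr rfl fun k hk => ?_
      rw [SimpleGraph.mem_neighborFinset, G.adj_comm] at hk
      simp [hk]; ring
    · intro k _ h
      by_contra hadj
      simp [hadj] at h
  rw [hL2] at key
  rw [← key, hR]
end

section
/- Let f be an automorphism of A_Γ with matrix entries t_{ik}, and let i, j, k be vertices with N(j) = N(k). Then Σ_{ℓ ∈ N(i)} t_{ℓ k} = Σ_{ℓ ∈ N(i)} t_{ℓ j}. -/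
/-- If vertices `j` and `k` have the same neighborhoods, then for any automorphism of
`A_Γ` with entries `t` and any vertex `i`, `∑_{ℓ ∈ N(i)} t_{ℓ k} = ∑_{ℓ ∈ N(i)} t_{ℓ j}`. -/
theorem aut_entries_twin_vertices {V K : Type*} [Fintype V] [DecidableEq V] [Field K]
    [CharZero K]
    (G : SimpleGraph V) [DecidableRel G.Adj] (hconn : G.Connected)
    (f : (V → K) → (V → K)) (hf : IsEvAut G f)
    (t : V → V → K) (ht : ∀ i, f (Pi.single i 1) = t i)
    (i j k : V) (hjk : G.neighborFinset j = G.neighborFinset k) :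
    ∑ ℓ ∈ G.neighborFinset i, t ℓ k = ∑ ℓ ∈ G.neighborFinset i, t ℓ j := by
  obtain ⟨hbij, hlin, hmul⟩ := hf
  have hAdj : ∀ p, G.Adj p j ↔ G.Adj p k := by
    intro p
    have hmem : p ∈ G.neighborFinset j ↔ p ∈ G.neighborFinset k := by rw [hjk]
    simpa [SimpleGraph.mem_neighborFinset, SimpleGraph.adj_comm] using hmem
  have h1 : evMul G (Pi.single i (1 : K)) (Pi.single i 1)
      = ∑ ℓ ∈ G.neighborFinset i, Pi.single ℓ (1 : K) := by
    funext m
    have hL : evMul G (Pi.single i (1 : K)) (Pi.single i 1) m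
        = if G.Adj i m then 1 else 0 := by
      unfold evMul
      rw [Finset.sum_eq_single i]
      · simp
      · intro b _ hb; simp [Pi.single_apply, hb]
      · simp
    have hR : (∑ ℓ ∈ G.neighborFinset i, Pi.single ℓ (1 : K)) m
        = if G.Adj i m then 1 else 0 := by
      rw [Finset.sum_apply]
      by_cases h : G.Adj i m
      · rw [if_pos h, Finset.sum_eq_single m]
        · simp
        · intro b _ hb; simp [Pi.single_apply, Ne.symm hb]
        · intro hm; exact absurd ((G.mem_neighborFinset i m).mpr h) hm
      · rw [if_neg h]
        apply Finset.sum_eq_zero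
        intro b hb
        have hbm : b ≠ m := fun e => h (e ▸ (G.mem_neighborFinset i b).mp hb)
        simp [Pi.single_apply, Ne.symm hbm]
    rw [hL, hR]
  have key : ∀ m, ∑ ℓ ∈ G.neighborFinset i, t ℓ m
      = ∑ p, t i p * t i p * (if G.Adj p m then 1 else 0) := by
    intro m
    have F := IsLinearMap.mk' f hlin
    have h2 : f (evMul G (Pi.single i (1 : K)) (Pi.single i 1))
        = ∑ ℓ ∈ G.neighborFinset i, t ℓ := by
      rw [h1]
      have := map_sum (IsLinearMap.mk' f hlin) (fun ℓ => Pi.single ℓ (1 : K))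
        (G.neighborFinset i)
      simp only [IsLinearMap.mk'_apply] at this
      rw [this]
      exact Finset.sum_congr rfl fun ℓ _ => ht ℓ
    have h3 := hmul (Pi.single i (1 : K)) (Pi.single i 1)
    rw [h2, ht] at h3
    have := congrFun h3 m
    simp only [evMul, Finset.sum_apply] at this
    exact this

  rw [key j, key k]
  exact Finset.sum_congr rfl fun p _ => by simp [hAdj p]
end

section
/- Let f be an automorphism of A_Γ with matrix entries t_{ik}, and let ℓ be a vertex of degree one with unique neighbor k_ℓ. Then t_{i k_ℓ} t_{j k_ℓ} = 0 for all i ≠ j, and there is exactly one vertex i with t_{i k_ℓ} ≠ 0. -/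
/-- If `ℓ` is a degree-one vertex with unique neighbor `kℓ`, then for any automorphism of
`A_Γ` with entries `t`: `t_{i kℓ} t_{j kℓ} = 0` for `i ≠ j`, and exactly one row has a
nonzero entry in column `kℓ`. -/
theorem aut_entries_pendant_vertex {V K : Type*} [Fintype V] [DecidableEq V] [Field K]
    [CharZero K]
    (G : SimpleGraph V) [DecidableRel G.Adj] (hconn : G.Connected) (hcard : 2 ≤ Fintype.card V)
    (f : (V → K) → (V → K)) (hf : IsEvAut G f)
    (t : V → V → K) (ht : ∀ i, f (Pi.single i 1) = t i)
    (ℓ kℓ : V) (hℓ : G.neighborFinset ℓ = {kℓ}) :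
    (∀ i j, i ≠ j → t i kℓ * t j kℓ = 0) ∧ (∃! i, t i kℓ ≠ 0) := by
  obtain ⟨hbij, hlin, hmul⟩ := hf
  have hadj : ∀ k, G.Adj k ℓ ↔ k = kℓ := by
    intro k
    rw [G.adj_comm, ← SimpleGraph.mem_neighborFinset, hℓ, Finset.mem_singleton]
  have key : ∀ i j, i ≠ j → t i kℓ * t j kℓ = 0 := by
    intro i j hij
    have h0 : evMul G (Pi.single i (1:K)) (Pi.single j 1) = 0 := by
      funext m
      simp only [evMul]
      apply Finset.sum_eq_zero
      intro k _
      by_cases hk : k = i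
      · rw [Pi.single_eq_of_ne (hk ▸ hij : k ≠ j)]
        ring
      · rw [Pi.single_eq_of_ne hk]
        ring
    have h1 := hmul (Pi.single i (1:K)) (Pi.single j 1)
    rw [h0, hlin.map_zero, ht i, ht j] at h1
    have h2 := congrFun h1.symm ℓ
    simp only [evMul, Pi.zero_apply] at h2
    rw [Finset.sum_eq_single kℓ] at h2
    · rw [if_pos ((hadj kℓ).2 rfl), mul_one] at h2
      exact h2
    · intro k _ hk
      rw [if_neg (fun h => hk ((hadj k).1 h)), mul_zero]
    · intro h
      exact absurd (Finset.mem_univ kℓ) h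
  refine ⟨key, ?_⟩
  have hrep : ∀ x : V → K, f x = ∑ i, x i • t i := by
    intro x
    have hx : x = ∑ i, x i • (Pi.single i 1 : V → K) := by
      funext m
      simp [Finset.sum_apply, Pi.single_apply, mul_ite, Finset.sum_ite_eq]
    let g := hlin.mk' f
    have hg : ∀ y, f y = g y := fun _ => rfl
    rw [hg]
    conv_lhs => rw [hx]
    rw [map_sum]
    simp only [map_smul]
    congr 1
    funext i
    rw [← hg, ht i]
  have hex : ∃ i, t i kℓ ≠ 0 := by
    by_contra h
    push_neg at h
    obtain ⟨x, hx⟩ := hbij.2 (Pi.single kℓ (1:K))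
    have h1 : f x kℓ = 1 := by rw [hx, Pi.single_eq_same]
    rw [hrep] at h1
    simp only [Finset.sum_apply, Pi.smul_apply, smul_eq_mul] at h1
    rw [Finset.sum_eq_zero (fun i _ => by rw [h i, mul_zero])] at h1
    exact zero_ne_one h1
  obtain ⟨i, hi⟩ := hex
  exact ⟨i, hi, fun j hj => by
    by_contra hji
    exact hj (mul_eq_zero.1 (key j i hji) |>.resolve_right hi)⟩
end

section
/- Let σ be a symmetry (graph automorphism) of Γ and f an automorphism of A_Γ with f(e_i) = Σ_k t_{ik} e_k. Then the linear map g defined by g(e_i) = Σ_k t_{ik} e_{σ(k)} is also an algebra automorphism of A_Γ. -/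
/-- If `σ` is a symmetry of `Γ` and `f` an automorphism of `A_Γ` with entries `t`, then
the linear map `g` with `g(e_i) = ∑_k t_{ik} e_{σ(k)}` is again an automorphism of `A_Γ`. -/
theorem aut_twisted_by_symmetry {V K : Type*} [Fintype V] [DecidableEq V] [Field K] [CharZero K]
    (G : SimpleGraph V) [DecidableRel G.Adj] (hconn : G.Connected)
    (σ : V ≃ V) (hσ : ∀ i j, G.Adj i j ↔ G.Adj (σ i) (σ j))
    (f : (V → K) → (V → K)) (hf : IsEvAut G f)
    (t : V → V → K) (ht : ∀ i, f (Pi.single i 1) = t i) :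
    IsEvAut G (fun x m => ∑ i, x i * t i (σ.symm m)) := by
  obtain ⟨hbij, hlin, hmul⟩ := hf
  -- f is determined by its matrix: f x m = ∑ i, x i * t i m
  have key : ∀ (x : V → K) (m : V), f x m = ∑ i, x i * t i m := by
    intro x m
    have hx : x = ∑ i, x i • (Pi.single i 1 : V → K) := by
      funext j
      simp [Finset.sum_apply, Pi.single_apply]
    have : f x = ∑ i, x i • t i := by
      calc f x = (hlin.mk' f) (∑ i, x i • (Pi.single i 1 : V → K)) := by
            rw [← hx]; rfl
        _ = ∑ i, x i • (hlin.mk' f) ((Pi.single i 1 : V → K)) := by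
            rw [map_sum]; simp
        _ = ∑ i, x i • t i := by simp [IsLinearMap.mk'_apply, ht]
    rw [this]
    simp [Finset.sum_apply, smul_eq_mul]
  -- the map in question is (permute by σ) ∘ f
  have hg : (fun (x : V → K) m => ∑ i, x i * t i (σ.symm m)) =
      (fun (y : V → K) m => y (σ.symm m)) ∘ f := by
    funext x m
    simp [Function.comp, key]
  rw [hg]
  have hPbij : Function.Bijective (fun (y : V → K) m => y (σ.symm m)) := by
    constructor
    · intro a b h
      funext m
      have := congrFun h (σ m)
      simpa using this
    · intro y
      exact ⟨fun m => y (σ m), by funext m; simp⟩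
  refine ⟨hPbij.comp hbij, ?_, ?_⟩
  · constructor
    · intro x y
      simp only [Function.comp, hlin.map_add]
      rfl
    · intro c x
      simp only [Function.comp, hlin.map_smul]
      rfl
  · intro x y
    funext m
    simp only [Function.comp, hmul, evMul]
    -- LHS: ∑ i, f x i * f y i * [Adj i (σ.symm m)]
    -- RHS: ∑ i, f x (σ.symm i) * f y (σ.symm i) * [Adj i m]
    rw [← Equiv.sum_comp σ (fun i => f x (σ.symm i) * f y (σ.symm i) *
      (if G.Adj i m then (1:K) else 0))]
    refine Finset.sum_congr rfl fun i _ => ?_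
    have : G.Adj i (σ.symm m) ↔ G.Adj (σ i) m := by
      rw [hσ i (σ.symm m), Equiv.apply_symm_apply]
    simp [this]
end

section
/- Let σ be a symmetry of Γ and f an automorphism of the random-walk evolution algebra A_{RW(Γ)} with f(e_i) = Σ_k t_{ik} e_k. Then g defined by g(e_i) = Σ_k t_{ik} e_{σ(k)} is an algebra automorphism of A_{RW(Γ)}. -/
/-- If `σ` is a symmetry of `Γ` and `f` an automorphism of `A_{RW(Γ)}` with entries `t`,
then the linear map `g` with `g(e_i) = ∑_k t_{ik} e_{σ(k)}` is again an automorphism of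
`A_{RW(Γ)}`. -/
theorem rw_aut_twisted_by_symmetry {V K : Type*} [Fintype V] [DecidableEq V] [Field K]
    [CharZero K]
    (G : SimpleGraph V) [DecidableRel G.Adj] (hconn : G.Connected)
    (σ : V ≃ V) (hσ : ∀ i j, G.Adj i j ↔ G.Adj (σ i) (σ j))
    (f : (V → K) → (V → K)) (hf : IsRwAut G f)
    (t : V → V → K) (ht : ∀ i, f (Pi.single i 1) = t i) :
    IsRwAut G (fun x m => ∑ i, x i * t i (σ.symm m)) := by
  obtain ⟨hbij, hlin, hmul⟩ := hf
  -- σ preserves degrees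
  have hdeg : ∀ i, G.degree (σ i) = G.degree i := by
    intro i
    unfold SimpleGraph.degree
    apply Finset.card_bij (fun a _ => σ.symm a)
    · intro a ha
      simp only [SimpleGraph.mem_neighborFinset] at *
      rw [hσ]
      simpa using ha
    · intro a _ b _ h
      exact σ.symm.injective h
    · intro b hb
      refine ⟨σ b, ?_, by simp⟩
      simp only [SimpleGraph.mem_neighborFinset] at *
      exact (hσ i b).mp hb
  have hadj : ∀ j m, G.Adj (σ j) m ↔ G.Adj j (σ.symm m) := by
    intro j m
    rw [hσ j (σ.symm m), Equiv.apply_symm_apply]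
  -- f expressed via coordinates
  let F : (V → K) →ₗ[K] (V → K) := IsLinearMap.mk' f hlin
  have hfx : ∀ x k, f x k = ∑ i, x i * t i k := by
    intro x k
    have hx : x = ∑ i, x i • (Pi.single i 1 : V → K) := by
      funext j
      simp [Finset.sum_apply, Pi.single_apply]
    have : f x = F x := rfl
    rw [this]
    conv_lhs => rw [hx]
    rw [map_sum, Finset.sum_apply]
    refine Finset.sum_congr rfl fun i _ => ?_
    have : F (x i • (Pi.single i 1 : V → K)) = x i • f (Pi.single i 1 : V → K) :=
      map_smul F (x i) _
    rw [this, ht i]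
    simp
  -- the twisted map is f followed by relabeling via σ
  have hg : (fun x m => ∑ i, x i * t i (σ.symm m))
      = (fun y : V → K => fun m => y (σ.symm m)) ∘ f := by
    funext x m
    simp only [Function.comp_apply]
    exact (hfx x (σ.symm m)).symm
  refine ⟨?_, ?_, ?_⟩
  · rw [hg]
    exact (Equiv.arrowCongr σ (Equiv.refl K)).bijective.comp hbij
  · constructor
    · intro x y
      funext m
      simp [add_mul, Finset.sum_add_distrib]
    · intro c x
      funext m
      simp [Finset.mul_sum, mul_assoc]
  · intro x y
    rw [hg]
    simp only [Function.comp_apply, hmul]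
    funext m
    unfold rwMul
    rw [← Equiv.sum_comp σ (fun i => f x (σ.symm i) * f y (σ.symm i) *
      (if G.Adj i m then ((G.degree i : K))⁻¹ else 0))]
    refine Finset.sum_congr rfl fun j _ => ?_
    simp only [Equiv.symm_apply_apply, hdeg, hadj]
end

section
/- Every algebra automorphism of the evolution algebra A_{P_3} of the path graph on three vertices over ℂ is induced by a symmetry of P_3: in the natural basis e_1, e_2, e_3 (with e_1^2 = e_2, e_2^2 = e_1 + e_3, e_3^2 = e_2, e_i e_j = 0 for i ≠ j), its matrix is either diagonal or the anti-diagonal form swapping e_1 and e_3 up to scalars; consequently Aut(A_{P_3}) has exactly 6 elements. -/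
/-- The product of the evolution ℂ-algebra of the path graph `P₃` (vertices `0,1,2`,
edges `{0,1}`, `{1,2}`): `e_i e_j = 0` for `i ≠ j`, `e₀² = e₁`, `e₁² = e₀ + e₂`,
`e₂² = e₁`. -/
def P3Mul (x y : Fin 3 → ℂ) : Fin 3 → ℂ :=
  fun k => if k = 1 then x 0 * y 0 + x 2 * y 2 else x 1 * y 1

/-- `f` is an algebra automorphism of the evolution algebra `A_{P₃}`. -/
def IsP3Aut (f : (Fin 3 → ℂ) → (Fin 3 → ℂ)) : Prop :=
  Function.Bijective f ∧ IsLinearMap ℂ f ∧ ∀ x y, f (P3Mul x y) = P3Mul (f x) (f y)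

def autF (σ : Equiv.Perm (Fin 3)) (s : ℂ) (x : Fin 3 → ℂ) : Fin 3 → ℂ :=
  fun k => (if k = 1 then s else s ^ 2) * x (σ k)

lemma autF_isAut (σ : Equiv.Perm (Fin 3))
    (hσ : σ = Equiv.refl (Fin 3) ∨ σ = Equiv.swap 0 2) (s : ℂ) (hs : s ^ 3 = 1) :
    IsP3Aut (autF σ s) := by
  refine ⟨?_, ?_, ?_⟩
  · rw [Function.bijective_iff_has_inverse]
    refine ⟨autF σ (s ^ 2), ?_, ?_⟩ <;>
    · intro x
      funext k
      rcases hσ with h | h <;> subst h <;> fin_cases k <;>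
        simp [autF, Equiv.swap_apply_def] <;>
        first
          | linear_combination (x 0) * hs
          | linear_combination (x 1) * hs
          | linear_combination (x 2) * hs
          | linear_combination (x 0 * (s ^ 3 + 1)) * hs
          | linear_combination (x 1 * (s ^ 3 + 1)) * hs
          | linear_combination (x 2 * (s ^ 3 + 1)) * hs
  · constructor <;> intros <;> funext k <;> by_cases hk : k = 1 <;> simp [autF, hk] <;> ring
  · intro x y
    funext k
    rcases hσ with h | h <;> subst h <;> fin_cases k <;>
      simp [autF, P3Mul, Equiv.swap_apply_def] <;>
      first
        | linear_combination (-(s * (x 0 * y 0 + x 2 * y 2))) * hs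
        | ring

lemma classify (f : (Fin 3 → ℂ) → (Fin 3 → ℂ)) (hf : IsP3Aut f) :
    ∃ s : ℂ, s ^ 3 = 1 ∧
      (f = autF (Equiv.refl (Fin 3)) s ∨ f = autF (Equiv.swap 0 2) s) := by
  obtain ⟨hbij, hlin, hmul⟩ := hf
  set e0 : Fin 3 → ℂ := Pi.single 0 1 with he0
  set e1 : Fin 3 → ℂ := Pi.single 1 1 with he1
  set e2 : Fin 3 → ℂ := Pi.single 2 1 with he2
  set a := f e0 with ha
  set b := f e1 with hb
  set c := f e2 with hc
  have hf0 : f 0 = 0 := hlin.map_zero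
  -- products of basis elements
  have hP00 : P3Mul e0 e0 = e1 := by
    funext k; fin_cases k <;> simp [P3Mul, he0, he1, Pi.single_apply]
  have hP11 : P3Mul e1 e1 = e0 + e2 := by
    funext k; fin_cases k <;> simp [P3Mul, he0, he1, he2, Pi.single_apply]
  have hP22 : P3Mul e2 e2 = e1 := by
    funext k; fin_cases k <;> simp [P3Mul, he2, he1, Pi.single_apply]
  have hP01 : P3Mul e0 e1 = 0 := by
    funext k; fin_cases k <;> simp [P3Mul, he0, he1, Pi.single_apply]
  have hP02 : P3Mul e0 e2 = 0 := by
    funext k; fin_cases k <;> simp [P3Mul, he0, he2, Pi.single_apply]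
  have hP12 : P3Mul e1 e2 = 0 := by
    funext k; fin_cases k <;> simp [P3Mul, he1, he2, Pi.single_apply]
  -- image equations
  have hAA : P3Mul a a = b := by rw [← hmul, hP00]
  have hBB : P3Mul b b = a + c := by rw [← hmul, hP11, hlin.map_add]
  have hCC : P3Mul c c = b := by rw [← hmul, hP22]
  have hAB : P3Mul a b = 0 := by rw [← hmul, hP01, hf0]
  have hAC : P3Mul a c = 0 := by rw [← hmul, hP02, hf0]
  have hBC : P3Mul b c = 0 := by rw [← hmul, hP12, hf0]
  -- scalar equations
  have A1 : a 1 * a 1 = b 0 := by simpa [P3Mul] using congrFun hAA 0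
  have A2 : a 0 * a 0 + a 2 * a 2 = b 1 := by simpa [P3Mul] using congrFun hAA 1
  have A3 : a 1 * a 1 = b 2 := by simpa [P3Mul] using congrFun hAA 2
  have C1 : c 1 * c 1 = b 0 := by simpa [P3Mul] using congrFun hCC 0
  have C2 : c 0 * c 0 + c 2 * c 2 = b 1 := by simpa [P3Mul] using congrFun hCC 1
  have B1 : b 1 * b 1 = a 0 + c 0 := by simpa [P3Mul] using congrFun hBB 0
  have B3 : b 1 * b 1 = a 2 + c 2 := by simpa [P3Mul] using congrFun hBB 2
  have AB1 : a 1 * b 1 = 0 := by simpa [P3Mul] using congrFun hAB 0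
  have AC1 : a 1 * c 1 = 0 := by simpa [P3Mul] using congrFun hAC 0
  have BC1 : b 1 * c 1 = 0 := by simpa [P3Mul] using congrFun hBC 0
  -- b ≠ 0
  have hbne : b ≠ 0 := by
    intro h
    have : e1 = 0 := hbij.injective (by rw [← hb, h, hf0])
    have := congrFun this 1
    simp [he1] at this
  -- main case analysis
  by_cases hb1 : b 1 = 0
  · exfalso
    by_cases ha1 : a 1 = 0
    · apply hbne
      funext k
      fin_cases k
      · show b 0 = 0
        rw [← A1, ha1, mul_zero]
      · exact hb1
      · show b 2 = 0
        rw [← A3, ha1, mul_zero]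
    · have hc1 : c 1 = 0 := by
        rcases mul_eq_zero.mp AC1 with h | h
        · exact absurd h ha1
        · exact h
      apply ha1
      have : a 1 * a 1 = 0 := by rw [A1, ← C1, hc1, mul_zero]
      exact (mul_self_eq_zero).mp this
  · -- b 1 ≠ 0
    set s := b 1 with hs_def
    have ha1 : a 1 = 0 := by
      rcases mul_eq_zero.mp AB1 with h | h
      · exact h
      · exact absurd h hb1
    have hc1 : c 1 = 0 := by
      rcases mul_eq_zero.mp BC1 with h | h
      · exact absurd h hb1
      · exact h
    have hb0 : b 0 = 0 := by rw [← A1, ha1, mul_zero]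
    have hb2 : b 2 = 0 := by rw [← A3, ha1, mul_zero]
    have hc0 : c 0 = s * s - a 0 := by linear_combination -B1
    have hc2 : c 2 = s * s - a 2 := by linear_combination -B3
    have AC1' : a 0 * c 0 + a 2 * c 2 = 0 := by simpa [P3Mul] using congrFun hAC 1
    -- sum equation
    have hsum : a 0 + a 2 = s * s := by
      have key : s * s * ((a 0 + a 2) - s * s) = 0 := by
        rw [hc0, hc2] at C2
        linear_combination (1/2 : ℂ) * A2 - (1/2 : ℂ) * C2
      have hss : s * s ≠ 0 := mul_ne_zero hb1 hb1
      exact sub_eq_zero.mp ((mul_eq_zero.mp key).resolve_left hss)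
    have hs3 : s ^ 3 = 1 := by
      have key : s * (s ^ 3 - 1) = 0 := by
        rw [hc0, hc2] at AC1'
        linear_combination AC1' - (s * s) * hsum + A2
      have := (mul_eq_zero.mp key).resolve_left hb1
      linear_combination this
    have ha02 : a 0 * a 2 = 0 := by
      linear_combination ((a 0 + a 2 + s * s) / 2) * hsum - (1/2 : ℂ) * A2 + (s / 2) * hs3
    have hxdec : ∀ x : Fin 3 → ℂ, x = x 0 • e0 + x 1 • e1 + x 2 • e2 := by
      intro x; funext k; fin_cases k <;> simp [he0, he1, he2, Pi.single_apply]
    have hfx : ∀ x, f x = fun k => x 0 * a k + x 1 * b k + x 2 * c k := by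
      intro x
      conv_lhs => rw [hxdec x]
      rw [hlin.map_add, hlin.map_add, hlin.map_smul, hlin.map_smul, hlin.map_smul]
      funext k
      simp [ha, hb, hc]
    refine ⟨s, hs3, ?_⟩
    rcases mul_eq_zero.mp ha02 with h0 | h2
    · right
      have ha2' : a 2 = s * s := by linear_combination hsum - h0
      have hc0' : c 0 = s * s := by rw [hc0, h0, sub_zero]
      have hc2' : c 2 = 0 := by rw [hc2, ha2']; ring
      funext x
      rw [hfx x]
      funext k
      fin_cases k <;>
        simp [autF, Equiv.swap_apply_def, h0, ha1, ha2', hb0, hb2, hc0', hc1, hc2',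
          ← hs_def] <;> ring
    · left
      have ha0' : a 0 = s * s := by linear_combination hsum - h2
      have hc0' : c 0 = 0 := by rw [hc0, ha0']; ring
      have hc2' : c 2 = s * s := by rw [hc2, h2, sub_zero]
      funext x
      rw [hfx x]
      funext k
      fin_cases k <;>
        simp [autF, h2, ha1, ha0', hb0, hb2, hc0', hc1, hc2', ← hs_def] <;> ring

noncomputable def w1 : ℂ := (-1 + Real.sqrt 3 * Complex.I) / 2
noncomputable def w2 : ℂ := (-1 - Real.sqrt 3 * Complex.I) / 2

lemma sqrt3_sq : ((Real.sqrt 3 : ℝ) : ℂ) ^ 2 = 3 := by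
  norm_cast
  exact Real.sq_sqrt (by norm_num)

lemma w1_cube : w1 ^ 3 = 1 := by
  simp only [w1]
  linear_combination ((3 - (Real.sqrt 3 : ℂ) * Complex.I) / 8) * sqrt3_sq +
    ((-3 * ((Real.sqrt 3 : ℂ)) ^ 2 + ((Real.sqrt 3 : ℂ)) ^ 3 * Complex.I) / 8) * Complex.I_sq

lemma w2_cube : w2 ^ 3 = 1 := by
  simp only [w2]
  linear_combination ((3 + (Real.sqrt 3 : ℂ) * Complex.I) / 8) * sqrt3_sq +
    ((-3 * ((Real.sqrt 3 : ℂ)) ^ 2 - ((Real.sqrt 3 : ℂ)) ^ 3 * Complex.I) / 8) * Complex.I_sq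

lemma cube_roots {s : ℂ} (hs : s ^ 3 = 1) : s = 1 ∨ s = w1 ∨ s = w2 := by
  have key : (s - 1) * ((s - w1) * (s - w2)) = 0 := by
    simp only [w1, w2]
    linear_combination hs + ((s - 1) / 4) * sqrt3_sq +
      (-(s - 1) * ((Real.sqrt 3 : ℂ)) ^ 2 / 4) * Complex.I_sq
  rcases mul_eq_zero.mp key with h | h
  · exact Or.inl (sub_eq_zero.mp h)
  · rcases mul_eq_zero.mp h with h | h
    · exact Or.inr (Or.inl (sub_eq_zero.mp h))
    · exact Or.inr (Or.inr (sub_eq_zero.mp h))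

lemma sqrt3_ne : Real.sqrt 3 ≠ 0 := by positivity

lemma w1_ne_one : w1 ≠ 1 := by
  intro h
  have := congrArg Complex.im h
  simp [w1, Complex.div_im] at this

lemma w2_ne_one : w2 ≠ 1 := by
  intro h
  have := congrArg Complex.im h
  simp [w2, Complex.div_im] at this

lemma w1_ne_w2 : w1 ≠ w2 := by
  intro h
  have := congrArg Complex.im h
  simp [w1, w2, Complex.div_im] at this
  have h3 : 0 < Real.sqrt 3 := Real.sqrt_pos.mpr (by norm_num)
  linarith

lemma cube_ne_zero {s : ℂ} (hs : s ^ 3 = 1) : s ≠ 0 := by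
  intro h; rw [h] at hs; norm_num at hs

lemma autF_inj {σ σ' : Equiv.Perm (Fin 3)}
    (hσ : σ = Equiv.refl (Fin 3) ∨ σ = Equiv.swap 0 2)
    (hσ' : σ' = Equiv.refl (Fin 3) ∨ σ' = Equiv.swap 0 2)
    {s s' : ℂ} (hs : s ≠ 0)
    (h : autF σ s = autF σ' s') : σ = σ' ∧ s = s' := by
  have h1 := congrFun (congrFun h (Pi.single 1 1)) 1
  have h0 := congrFun (congrFun h (Pi.single 0 1)) 0
  rcases hσ with rfl | rfl <;> rcases hσ' with rfl | rfl
  · refine ⟨rfl, ?_⟩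
    simpa [autF, Pi.single_apply] using h1
  · exfalso
    simp [autF, Equiv.swap_apply_def, Pi.single_apply] at h0
    exact hs h0
  · exfalso
    have hss' : s = s' := by
      simpa [autF, Equiv.swap_apply_def, Pi.single_apply] using h1
    simp [autF, Equiv.swap_apply_def, Pi.single_apply] at h0
    exact hs (by rw [hss']; exact (pow_eq_zero_iff two_ne_zero).mp h0.symm)
  · refine ⟨rfl, ?_⟩
    simpa [autF, Equiv.swap_apply_def, Pi.single_apply] using h1

noncomputable def s6 : Fin 6 → ℂ := ![1, w1, w2, 1, w1, w2]

def σ6 : Fin 6 → Equiv.Perm (Fin 3) :=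
  ![Equiv.refl _, Equiv.refl _, Equiv.refl _, Equiv.swap 0 2, Equiv.swap 0 2, Equiv.swap 0 2]

lemma hσ6 : ∀ i, σ6 i = Equiv.refl (Fin 3) ∨ σ6 i = Equiv.swap 0 2 := by
  intro i; fin_cases i <;> first | exact Or.inl rfl | exact Or.inr rfl

lemma hs6 : ∀ i, (s6 i) ^ 3 = 1 := by
  intro i; fin_cases i <;> first | exact one_pow 3 | exact w1_cube | exact w2_cube

/-- Every automorphism of `A_{P₃}` is induced by a symmetry of `P₃`: it sends
`e_i ↦ μ_i e_{σ(i)}` where `σ` is the identity or the swap of the two endpoints;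
consequently `Aut(A_{P₃})` has exactly `6` elements. -/
theorem p3_aut_induced_and_card :
    (∀ f, IsP3Aut f → ∃ (σ : Equiv.Perm (Fin 3)) (μ : Fin 3 → ℂ),
      (σ = Equiv.refl (Fin 3) ∨ σ = Equiv.swap 0 2) ∧ (∀ i, μ i ≠ 0) ∧
      ∀ i, f (Pi.single i 1) = μ i • (Pi.single (σ i) 1 : Fin 3 → ℂ)) ∧
    Nat.card {f // IsP3Aut f} = 6 := by
  constructor
  · intro f hf
    obtain ⟨s, hs3, hcase⟩ := classify f hf
    have hs0 : s ≠ 0 := cube_ne_zero hs3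
    have hμ : ∀ i : Fin 3, (if i = 1 then s else s ^ 2) ≠ 0 := by
      intro i
      split
      · exact hs0
      · exact pow_ne_zero 2 hs0
    rcases hcase with rfl | rfl
    · refine ⟨Equiv.refl (Fin 3), fun i => if i = 1 then s else s ^ 2, Or.inl rfl, hμ, ?_⟩
      intro i
      funext k
      fin_cases i <;> fin_cases k <;> simp [autF, Pi.single_apply]
    · refine ⟨Equiv.swap 0 2, fun i => if i = 1 then s else s ^ 2, Or.inr rfl, hμ, ?_⟩
      intro i
      funext k
      fin_cases i <;> fin_cases k <;>
        simp [autF, Equiv.swap_apply_def, Pi.single_apply]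
  · have hbij : Function.Bijective
        (fun i : Fin 6 => (⟨autF (σ6 i) (s6 i),
          autF_isAut _ (hσ6 i) _ (hs6 i)⟩ : {f // IsP3Aut f})) := by
      constructor
      · intro i j h
        have h' : autF (σ6 i) (s6 i) = autF (σ6 j) (s6 j) := congrArg Subtype.val h
        obtain ⟨hσ, hs⟩ := autF_inj (hσ6 i) (hσ6 j) (cube_ne_zero (hs6 i)) h'
        have hσ0 : σ6 i 0 = σ6 j 0 := by rw [hσ]
        fin_cases i <;> fin_cases j <;>
          first
            | rfl
            | exact absurd hs (Ne.symm w1_ne_one)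
            | exact absurd hs (Ne.symm w2_ne_one)
            | exact absurd hs w1_ne_one
            | exact absurd hs w2_ne_one
            | exact absurd hs w1_ne_w2
            | exact absurd hs (Ne.symm w1_ne_w2)
            | exact absurd hσ0 (by decide)
      · rintro ⟨f, hf⟩
        obtain ⟨s, hs3, hcase⟩ := classify f hf
        rcases cube_roots hs3 with rfl | rfl | rfl <;> rcases hcase with rfl | rfl
        · exact ⟨0, Subtype.ext rfl⟩
        · exact ⟨3, Subtype.ext rfl⟩
        · exact ⟨1, Subtype.ext rfl⟩
        · exact ⟨4, Subtype.ext rfl⟩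
        · exact ⟨2, Subtype.ext rfl⟩
        · exact ⟨5, Subtype.ext rfl⟩
    calc Nat.card {f // IsP3Aut f} = Nat.card (Fin 6) :=
          (Nat.card_eq_of_bijective _ hbij).symm
      _ = 6 := by simp
end
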